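/- arXiv:1802.02635 — 6 statements merged into one kernel-verified Lean document; each statement's English description precedes it below -/
import Mathlib

section
/- Let n ≥ 1 and s ≥ 1 be integers and let u ∈ ℂ with |u| > 1, and set z = (u + u⁻¹)/2. Then ρ_{n,s}(z) = (2π / (2^{2s} (u − u⁻¹))) Σ_{k=0}^{s} C(2s+1, k) u^{(2k − 2s − 1)n}. -/
/-!
Substituting `t = cos θ` turns `ρ_{n,s}(z)` into `∫₀^π cos (nθ)^(2s+1) / (z - cos θ) dθ`.
Writing `cos x = (w + w⁻¹)/2` with `w = e^{ix}` and expanding by the binomial theorem reduces this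
to the integrals `I_m = ∫₀^π cos (mθ) / (z - cos θ) dθ`, and `I_m = 2π u^{-m} / (u - u⁻¹)`:
for `m = 0` by an explicit logarithmic primitive, for `m = 1` since `cos θ = z - (z - cos θ)`, and
in general because `cos ((m+2)θ) + cos (mθ) = 2 cos θ cos ((m+1)θ)` and `∫₀^π cos ((m+1)θ) = 0`
give the recurrence `I_{m+2} = (u + u⁻¹) I_{m+1} - I_m`, which `u^{-m}` also satisfies.
-/

open Complex Real

/-- Chebyshev polynomial of the first kind of degree `m`, evaluated at a complex point. -/
noncomputable def chebT (m : ℕ) (x : ℂ) : ℂ := (Polynomial.Chebyshev.T ℂ m).eval x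

/-- `ρ_{n,s}(z) = ∫_{−1}^{1} T_n(t)^(2s+1) / ((z − t) √(1 − t²)) dt`. -/
noncomputable def rhoNS (n s : ℕ) (z : ℂ) : ℂ :=
  ∫ t in (-1:ℝ)..1, chebT n (t : ℂ) ^ (2*s+1) / ((z - (t:ℂ)) * (Real.sqrt (1 - t^2) : ℂ))

theorem integral_inv_sqrt_one_sub_sq_smul {E : Type*} [NormedAddCommGroup E] [NormedSpace ℝ E]
    (F : ℝ → E) :
    ∫ t in (-1:ℝ)..1, (√(1 - t ^ 2))⁻¹ • F t = ∫ θ in (0:ℝ)..π, F (cos θ) := calc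
  ∫ t in (-1:ℝ)..1, (√(1 - t ^ 2))⁻¹ • F t
      = ∫ t in (1:ℝ)..(-1), (-(1 / √(1 - t ^ 2))) • ((F ∘ cos) ∘ arccos) t := by
    rw [intervalIntegral.integral_symm, ← intervalIntegral.integral_neg]
    refine intervalIntegral.integral_congr fun t ht => ?_
    rw [Set.uIcc_of_ge (by norm_num)] at ht
    simp [cos_arccos ht.1 ht.2]
  _ = ∫ θ in (0:ℝ)..π, F (cos θ) := by
    rw [intervalIntegral.integral_deriv_smul_comp_of_deriv_nonpos (f := arccos)]
    · simp
    · fun_prop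
    · exact fun x hx ↦ by simpa using (hasDerivAt_arccos (by aesop) (by aesop))
    · intro x _; simp only [one_div, Left.neg_nonpos_iff, inv_nonneg]; positivity

theorem Finset.sum_range_two_mul_add_two {M : Type*} [AddCommMonoid M] (f : ℕ → M) (s : ℕ) :
    ∑ j ∈ Finset.range (2 * s + 2), f j
      = ∑ k ∈ Finset.range (s + 1), (f k + f (2 * s + 1 - k)) := by
  rw [show 2 * s + 2 = (s + 1) + (s + 1) by ring, Finset.sum_range_add, Finset.sum_add_distrib,
    ← Finset.sum_range_reflect (fun x => f (s + 1 + x))]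
  congr 1
  refine Finset.sum_congr rfl fun k hk => ?_
  rw [Finset.mem_range] at hk
  congr 1
  omega

theorem add_inv_pow_two_mul_add_one {K : Type*} [Field K] {w : K} (hw : w ≠ 0) (s : ℕ) :
    (w + w⁻¹) ^ (2 * s + 1) = ∑ k ∈ Finset.range (s + 1),
      ((2 * s + 1).choose k : K) * (w ^ (2 * s + 1 - 2 * k) + (w ^ (2 * s + 1 - 2 * k))⁻¹) := by
  rw [add_pow, Finset.sum_range_two_mul_add_two]
  refine Finset.sum_congr rfl fun k hk => ?_
  rw [Finset.mem_range] at hk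
  have hk' : 2 * s + 1 - k = (2 * s + 1 - 2 * k) + k := by omega
  rw [Nat.choose_symm (by omega), Nat.sub_sub_self (by omega), hk', pow_add, pow_add, inv_pow,
    inv_pow]
  field_simp
  ring

theorem Complex.cos_pow_two_mul_add_one (s : ℕ) (x : ℂ) :
    cos x ^ (2 * s + 1) = (2 ^ (2 * s))⁻¹ * ∑ k ∈ Finset.range (s + 1),
      ((2 * s + 1).choose k : ℂ) * cos ((2 * s + 1 - 2 * k : ℕ) * x) := by
  have hcos : ∀ y : ℂ, cos y = (exp (y * I) + (exp (y * I))⁻¹) / 2 := fun y => by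
    rw [cos, ← exp_neg, neg_mul]
  have hpow : ∀ m : ℕ, exp (x * I) ^ m = exp ((m * x) * I) := fun m => by
    rw [← exp_nat_mul]; ring_nf
  rw [hcos x, div_pow, add_inv_pow_two_mul_add_one (exp_ne_zero _), Finset.mul_sum,
    Finset.sum_div]
  refine Finset.sum_congr rfl fun k _ => ?_
  rw [hcos, hpow, pow_succ]
  field_simp

theorem Complex.integral_cos_nat_mul_eq_zero {m : ℕ} (hm : m ≠ 0) :
    ∫ θ in (0:ℝ)..π, cos (m * θ : ℂ) = 0 := by
  have hreal : ∫ θ in (0:ℝ)..π, Real.cos (m * θ) = 0 := by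
    rw [intervalIntegral.integral_comp_mul_left Real.cos (Nat.cast_ne_zero.mpr hm)]
    simp [integral_cos, Real.sin_nat_mul_pi]
  simpa [← intervalIntegral.integral_ofReal] using congrArg ((↑) : ℝ → ℂ) hreal

section Joukowski

variable {u : ℂ} (hu : 1 < ‖u‖)
include hu

theorem sub_inv_ne_zero_of_one_lt_norm : u - u⁻¹ ≠ 0 := by
  intro h
  have : ‖u⁻¹‖ < 1 := by rw [norm_inv]; exact inv_lt_one_of_one_lt₀ hu
  rw [← sub_eq_zero.mp h] at this
  linarith

theorem sub_ne_zero_of_norm_eq_one {e : ℂ} (he : ‖e‖ = 1) : u - e ≠ 0 := fun h => by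
  rw [sub_eq_zero.mp h] at hu
  linarith

theorem one_sub_inv_mul_mem_slitPlane {e : ℂ} (he : ‖e‖ = 1) : 1 - u⁻¹ * e ∈ slitPlane := by
  rw [sub_eq_add_neg]
  refine mem_slitPlane_of_norm_lt_one ?_
  rw [norm_neg, norm_mul, he, mul_one, norm_inv]
  exact inv_lt_one_of_one_lt₀ hu

theorem joukowski_sub_cos_ne_zero (θ : ℝ) : (u + u⁻¹) / 2 - cos (θ : ℂ) ≠ 0 := by
  have hu0 : u ≠ 0 := norm_pos_iff.mp (one_pos.trans hu)
  have hfactor : (u - exp (θ * I)) * (u - exp ((-θ : ℝ) * I))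
      = 2 * u * ((u + u⁻¹) / 2 - cos (θ : ℂ)) := by
    rw [Complex.cos, ofReal_neg, neg_mul, Complex.exp_neg]
    field_simp
    ring
  intro h
  rw [h, mul_zero] at hfactor
  exact mul_ne_zero (sub_ne_zero_of_norm_eq_one hu (norm_exp_ofReal_mul_I θ))
    (sub_ne_zero_of_norm_eq_one hu (norm_exp_ofReal_mul_I (-θ))) hfactor

/-- Partial fractions: with `q = e^{iθ}/u` and `q' = e^{-iθ}/u`,
`(u - u⁻¹) / (u + u⁻¹ - 2 cos θ) = 1 + q/(1-q) + q'/(1-q')`, and the last two terms are the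
derivatives of `i log (1 - q)` and `-i log (1 - q')`; `|q|, |q'| < 1` keeps both logarithms
on their principal branch. -/
theorem hasDerivAt_joukowski_primitive (θ : ℝ) :
    HasDerivAt (fun θ : ℝ => (θ : ℂ) + I * log (1 - u⁻¹ * exp (θ * I))
        - I * log (1 - u⁻¹ * exp (θ * -I)))
      ((u - u⁻¹) / 2 / ((u + u⁻¹) / 2 - cos (θ : ℂ))) θ := by
  have hlog : ∀ c : ℂ, ‖exp (θ * c)‖ = 1 → HasDerivAt (fun θ : ℝ => log (1 - u⁻¹ * exp (θ * c)))
      (-(u⁻¹ * (exp (θ * c) * c)) / (1 - u⁻¹ * exp (θ * c))) θ := fun c hc => by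
    simpa using ((((hasDerivAt_id θ).ofReal_comp.mul_const c).cexp.const_mul u⁻¹).const_sub
      1).clog_real (one_sub_inv_mul_mem_slitPlane hu hc)
  have hnorm : ‖exp (θ * I)‖ = 1 := norm_exp_ofReal_mul_I θ
  have hnorm' : ‖exp (θ * -I)‖ = 1 := by simpa using norm_exp_ofReal_mul_I (-θ)
  refine (((hasDerivAt_id θ).ofReal_comp.add ((hlog I hnorm).const_mul I)).sub
    ((hlog (-I) hnorm').const_mul I)).congr_deriv ?_
  have hu0 : u ≠ 0 := norm_pos_iff.mp (one_pos.trans hu)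
  have hue := sub_ne_zero_of_norm_eq_one hu hnorm
  have hue' := sub_ne_zero_of_norm_eq_one hu hnorm'
  set e := exp (θ * I)
  set e' := exp (θ * -I)
  have hee : e * e' = 1 := by rw [← Complex.exp_add]; simp
  have hcos : cos (θ : ℂ) = (e + e') / 2 := by rw [Complex.cos, neg_mul, ← mul_neg]
  rw [hcos, ofReal_one]
  field_simp
  rw [I_sq, show u ^ 2 + 1 - u * (e + e') = (u - e) * (u - e') by linear_combination -hee,
    mul_div_cancel_left₀ _ (mul_ne_zero hue hue')]
  linear_combination -hee

theorem continuous_div_joukowski_sub_cos {g : ℝ → ℂ} (hg : Continuous g) :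
    Continuous fun θ : ℝ => g θ / ((u + u⁻¹) / 2 - cos (θ : ℂ)) :=
  hg.div (by fun_prop) (joukowski_sub_cos_ne_zero hu)

theorem integral_one_div_joukowski_sub_cos :
    ∫ θ in (0:ℝ)..π, 1 / ((u + u⁻¹) / 2 - cos (θ : ℂ)) = 2 * π / (u - u⁻¹) := by
  have hFTC := intervalIntegral.integral_eq_sub_of_hasDerivAt
    (fun θ _ => hasDerivAt_joukowski_primitive hu θ)
    ((continuous_div_joukowski_sub_cos hu continuous_const).intervalIntegrable 0 π)
  simp only [← mul_one_div ((u - u⁻¹) / 2), intervalIntegral.integral_const_mul] at hFTC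
  have hsub := sub_inv_ne_zero_of_one_lt_norm hu
  -- `e^{iπ} = e^{-iπ}` and `e^{0} = e^{-0}`: the logarithmic terms cancel at both endpoints
  simp only [exp_pi_mul_I, mul_neg, mul_one, sub_neg_eq_add, exp_neg_pi_mul_I,
    add_sub_cancel_right, ofReal_zero, zero_mul, Complex.exp_zero, zero_add, neg_zero, sub_self,
    sub_zero] at hFTC
  rw [eq_div_iff hsub, ← hFTC]
  ring

theorem integral_cos_nat_mul_div_joukowski_sub_cos (m : ℕ) :
    ∫ θ in (0:ℝ)..π, cos (m * θ : ℂ) / ((u + u⁻¹) / 2 - cos (θ : ℂ))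
      = 2 * π / (u - u⁻¹) * u⁻¹ ^ m := by
  set D : ℝ → ℂ := fun θ => (u + u⁻¹) / 2 - cos (θ : ℂ)
  have hD : ∀ θ, D θ ≠ 0 := joukowski_sub_cos_ne_zero hu
  have hint : ∀ k : ℕ,
      IntervalIntegrable (fun θ : ℝ => cos (k * θ : ℂ) / D θ) MeasureTheory.volume 0 π :=
    fun k => (continuous_div_joukowski_sub_cos hu (by fun_prop)).intervalIntegrable 0 π
  have hsub := sub_inv_ne_zero_of_one_lt_norm hu
  have hu0 : u ≠ 0 := norm_pos_iff.mp (one_pos.trans hu)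
  induction m using Nat.twoStepInduction with
  | zero => simpa using integral_one_div_joukowski_sub_cos hu
  | one =>
    have hpt : ∀ θ : ℝ, cos ((1 : ℕ) * θ : ℂ) / D θ = (u + u⁻¹) / 2 * (1 / D θ) - 1 := fun θ => by
      rw [mul_one_div, div_sub_one (hD θ), Nat.cast_one, one_mul, sub_sub_cancel]
    rw [intervalIntegral.integral_congr fun θ _ => hpt θ, intervalIntegral.integral_sub
      (((continuous_div_joukowski_sub_cos hu continuous_const).intervalIntegrable 0 π).const_mul _)
      intervalIntegrable_const, intervalIntegral.integral_const_mul,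
      integral_one_div_joukowski_sub_cos hu, intervalIntegral.integral_const, sub_zero,
      real_smul, mul_one]
    linear_combination (π : ℂ) * mul_inv_cancel₀ hsub
  | more m ih₀ ih₁ =>
    have hpt : ∀ θ : ℝ, cos ((m + 2 : ℕ) * θ : ℂ) / D θ
        = (u + u⁻¹) * (cos ((m + 1 : ℕ) * θ : ℂ) / D θ) - 2 * cos ((m + 1 : ℕ) * θ : ℂ)
          - cos (m * θ : ℂ) / D θ := fun θ => by
      have hprod : cos ((m + 2 : ℕ) * θ : ℂ) + cos (m * θ : ℂ)
          = 2 * cos ((m + 1 : ℕ) * θ : ℂ) * cos (θ : ℂ) := by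
        rw [show ((m + 2 : ℕ) * θ : ℂ) = (m + 1 : ℕ) * θ + θ by push_cast; ring,
          show (m * θ : ℂ) = (m + 1 : ℕ) * θ - θ by push_cast; ring, Complex.cos_add,
          Complex.cos_sub]
        ring
      rw [show u + u⁻¹ = 2 * D θ + 2 * cos (θ : ℂ) by simp only [D]; ring]
      field_simp [hD θ]
      linear_combination (norm := ring_nf) hprod
    have hcos := Complex.integral_cos_nat_mul_eq_zero m.succ_ne_zero
    rw [intervalIntegral.integral_congr fun θ _ => hpt θ, intervalIntegral.integral_sub
      (((hint _).const_mul _).sub (Continuous.intervalIntegrable (by fun_prop) _ _)) (hint m),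
      intervalIntegral.integral_sub ((hint _).const_mul _)
      (Continuous.intervalIntegrable (by fun_prop) _ _), intervalIntegral.integral_const_mul,
      intervalIntegral.integral_const_mul, hcos]
    simp only [D, ih₀, ih₁]
    linear_combination (2 * π / (u - u⁻¹) * u⁻¹ ^ m) * mul_inv_cancel₀ hu0

end Joukowski

theorem chebT_cos (m : ℕ) (θ : ℂ) : chebT m (cos θ) = cos (m * θ) := by
  have h := Polynomial.Chebyshev.T_complex_cos θ m
  rwa [Int.cast_natCast] at h

theorem rhoNS_eq_integral_cos (n s : ℕ) (z : ℂ) :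
    rhoNS n s z = ∫ θ in (0:ℝ)..π, cos (n * θ : ℂ) ^ (2 * s + 1) / (z - cos (θ : ℂ)) := by
  have hintegrand : ∀ t : ℝ, chebT n t ^ (2 * s + 1) / ((z - t) * (√(1 - t ^ 2) : ℂ))
      = (√(1 - t ^ 2))⁻¹ • (chebT n t ^ (2 * s + 1) / (z - t)) := fun t => by
    rw [real_smul, ofReal_inv, mul_comm (z - t), ← div_div, div_eq_inv_mul _ (√(1 - t ^ 2) : ℂ),
      mul_div_assoc]
  simp only [rhoNS, hintegrand, integral_inv_sqrt_one_sub_sq_smul, ofReal_cos, chebT_cos]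

theorem integral_cos_pow_div_joukowski_sub_cos {u : ℂ} (hu : 1 < ‖u‖) (n s : ℕ) :
    ∫ θ in (0:ℝ)..π, cos (n * θ : ℂ) ^ (2 * s + 1) / ((u + u⁻¹) / 2 - cos (θ : ℂ))
      = 2 * π / (2 ^ (2 * s) * (u - u⁻¹)) * ∑ k ∈ Finset.range (s + 1),
          ((2 * s + 1).choose k : ℂ) * u⁻¹ ^ ((2 * s + 1 - 2 * k) * n) := by
  have hintegrand : ∀ θ : ℝ, cos (n * θ : ℂ) ^ (2 * s + 1) / ((u + u⁻¹) / 2 - cos (θ : ℂ))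
      = (2 ^ (2 * s))⁻¹ * ∑ k ∈ Finset.range (s + 1), ((2 * s + 1).choose k : ℂ) *
        (cos (((2 * s + 1 - 2 * k) * n : ℕ) * θ : ℂ) / ((u + u⁻¹) / 2 - cos (θ : ℂ))) := by
    intro θ
    simp only [Complex.cos_pow_two_mul_add_one, mul_div_assoc, Finset.sum_div, Nat.cast_mul,
      mul_assoc]
  simp only [hintegrand, intervalIntegral.integral_const_mul]
  rw [intervalIntegral.integral_finsetSum fun k _ => ((continuous_div_joukowski_sub_cos hu
    (by fun_prop)).intervalIntegrable 0 π).const_mul _]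
  simp only [intervalIntegral.integral_const_mul, integral_cos_nat_mul_div_joukowski_sub_cos hu,
    Finset.mul_sum]
  exact Finset.sum_congr rfl fun k _ => by rw [← div_div]; ring

theorem stmt2_general (n s : ℕ) (u : ℂ) (hu : 1 < ‖u‖)
    (z : ℂ) (hz : z = (u + u⁻¹) / 2) :
    rhoNS n s z = (2 * (π:ℂ) / (2^(2*s) * (u - u⁻¹))) *
      ∑ k ∈ Finset.range (s + 1),
        (Nat.choose (2*s+1) k : ℂ) * u ^ ((2*(k:ℤ) - 2*(s:ℤ) - 1) * (n:ℤ)) := by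
  subst hz
  rw [rhoNS_eq_integral_cos, integral_cos_pow_div_joukowski_sub_cos hu]
  congr 1
  refine Finset.sum_congr rfl fun k hk => ?_
  rw [Finset.mem_range] at hk
  have hexp : (2 * (k : ℤ) - 2 * s - 1) * n = -(((2 * s + 1 - 2 * k) * n : ℕ) : ℤ) := by
    push_cast [Nat.cast_sub (show 2 * k ≤ 2 * s + 1 by omega)]
    ring
  rw [hexp, zpow_neg, zpow_natCast, inv_pow]

/-- For `n ≥ 1`, `s ≥ 1`, `|u| > 1` and `z = (u + u⁻¹)/2`,
`ρ_{n,s}(z) = (2π / (2^(2s) (u − u⁻¹))) Σ_{k=0}^{s} C(2s+1, k) u^((2k−2s−1)n)`. -/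
theorem stmt2 (n s : ℕ) (hn : 1 ≤ n) (hs : 1 ≤ s) (u : ℂ) (hu : 1 < ‖u‖)
    (z : ℂ) (hz : z = (u + u⁻¹) / 2) :
    rhoNS n s z = (2 * (π:ℂ) / (2^(2*s) * (u - u⁻¹))) *
      ∑ k ∈ Finset.range (s + 1),
        (Nat.choose (2*s+1) k : ℂ) * u ^ ((2*(k:ℤ) - 2*(s:ℤ) - 1) * (n:ℤ)) :=
  stmt2_general n s u hu z hz
end

section
/- Let n ≥ 1 and s ≥ 1 be integers and let u ∈ ℂ with |u| > 1, and set z = (u + u⁻¹)/2. Then K_{n,s}(z) = 2π Σ_{k=0}^{s} C(2s+1, k) u^{2nk} / (u^{(2s+1)n} (u^n + u^{−n})^{2s} (u − u⁻¹)). -/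
/-!
Substituting `t = cos θ` turns `ρ_{n,s}(z)` into `∫₀^π cos (nθ) ^ (2s+1) / (z - cos θ) dθ`,
which is half of the same integral over a full period. Expanding `cos (nθ) ^ (2s+1)`
binomially in `e^{± inθ}` reduces everything to
`∫₀^{2π} e^{imθ} / (z - cos θ) dθ = 4π u^{-|m|} / (u - u⁻¹)`.
This is Cauchy's integral formula on the unit circle: for `w = e^{iθ}` one has
`z - cos θ = (u - w) (u w - 1) / (2 u w)`, whose only zero in the unit disc is `w = u⁻¹`.
The terms `j` and `2s + 1 - j` of the expansion contribute equally,
and `T_n(z) = (u^n + u^{-n}) / 2`.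
-/

open Complex Real

/-- The kernel `K_{n,s}(z) = ρ_{n,s}(z) / T_n(z)^(2s)`. -/
noncomputable def kerK (n s : ℕ) (z : ℂ) : ℂ := rhoNS n s z / chebT n z ^ (2*s)

theorem integral_div_sqrt_one_sub_sq_eq_integral_cos (f : ℝ → ℂ) :
    ∫ t in (-1 : ℝ)..1, f t / (√(1 - t ^ 2) : ℂ) = ∫ θ in (0 : ℝ)..π, f (Real.cos θ) := by
  rw [intervalIntegral.integral_of_le (by norm_num), intervalIntegral.integral_of_le pi_pos.le,
    MeasureTheory.integral_Ioc_eq_integral_Ioo, MeasureTheory.integral_Ioc_eq_integral_Ioo,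
    ← show Real.cos '' Set.Ioo 0 π = Set.Ioo (-1) 1 from
      Real.cosPartialHomeomorph.image_source_eq_target,
    MeasureTheory.integral_image_eq_integral_abs_deriv_smul measurableSet_Ioo
      (fun θ _ => (Real.hasDerivAt_cos θ).hasDerivWithinAt) Real.cosPartialHomeomorph.injOn]
  refine MeasureTheory.setIntegral_congr_fun measurableSet_Ioo fun θ hθ => ?_
  have hsin : 0 < Real.sin θ := Real.sin_pos_of_pos_of_lt_pi hθ.1 hθ.2
  have hsqrt : √(1 - Real.cos θ ^ 2) = Real.sin θ := by
    rw [← Real.sin_sq, Real.sqrt_sq hsin.le]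
  rw [abs_neg, abs_of_pos hsin, hsqrt, Complex.real_smul,
    mul_div_cancel₀ _ (Complex.ofReal_ne_zero.mpr hsin.ne')]

theorem chebT_half_add_inv (n : ℕ) {u : ℂ} (hu : u ≠ 0) :
    chebT n ((u + u⁻¹) / 2) = (u ^ n + u⁻¹ ^ n) / 2 := by
  have : Invertible (2 : ℂ) := invertibleOfNonzero two_ne_zero
  rw [chebT, Polynomial.Chebyshev.T_eq_half_mul_C_comp_two_mul_X ℂ n]
  simp only [Polynomial.eval_mul, Polynomial.eval_C, Polynomial.eval_comp, Polynomial.eval_ofNat,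
    Polynomial.eval_X, mul_div_cancel₀ _ (two_ne_zero' ℂ),
    ← Polynomial.dickson_one_one_eq_chebyshev_C,
    Polynomial.dickson_one_one_eval_add_inv u u⁻¹ (mul_inv_cancel₀ hu), invOf_eq_inv]
  ring

theorem Complex.cos_pow_eq_sum_exp (x : ℂ) (N : ℕ) :
    cos x ^ N = ∑ j ∈ Finset.range (N + 1),
      (N.choose j : ℂ) * exp (((2 * j - N : ℤ) : ℂ) * x * I) / 2 ^ N := by
  rw [Complex.cos, div_pow, add_pow, Finset.sum_div]
  refine Finset.sum_congr rfl fun j hj => ?_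
  have hj : j ≤ N := Nat.lt_succ_iff.mp (Finset.mem_range.mp hj)
  rw [← Complex.exp_nat_mul, ← Complex.exp_nat_mul, ← Complex.exp_add, mul_comm (exp _)]
  congr 3
  push_cast [Nat.cast_sub hj]
  ring

theorem Finset.sum_range_two_mul_add_two_of_symm {M : Type*} [AddCommMonoid M] (s : ℕ)
    (g : ℕ → M) (hg : ∀ j ≤ 2 * s + 1, g (2 * s + 1 - j) = g j) :
    ∑ j ∈ range (2 * s + 2), g j = 2 • ∑ k ∈ range (s + 1), g k := by
  rw [show 2 * s + 2 = (s + 1) + (s + 1) by ring, Finset.sum_range_add, two_nsmul,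
    ← Finset.sum_range_reflect (fun k => g (s + 1 + k))]
  congr 1
  refine Finset.sum_congr rfl fun k hk => ?_
  have hk := Finset.mem_range.mp hk
  rw [← hg k (by omega)]
  congr 1
  omega

theorem intervalIntegral.integral_zero_two_pi_eq_two_nsmul {E : Type*} [NormedAddCommGroup E]
    [NormedSpace ℝ E] {g : ℝ → E} (hg : IntervalIntegrable g MeasureTheory.volume 0 (2 * π))
    (hsymm : ∀ θ, g (2 * π - θ) = g θ) :
    ∫ θ in (0 : ℝ)..2 * π, g θ = 2 • ∫ θ in (0 : ℝ)..π, g θ := by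
  have hmem : π ∈ Set.uIcc 0 (2 * π) := by
    rw [Set.uIcc_of_le (by positivity)]; constructor <;> linarith [pi_pos]
  rw [← intervalIntegral.integral_add_adjacent_intervals
    (hg.mono_set (Set.uIcc_subset_uIcc_left hmem)) (hg.mono_set (Set.uIcc_subset_uIcc_right hmem)),
    two_nsmul]
  congr 1
  calc ∫ θ in π..2 * π, g θ = ∫ θ in π..2 * π, g (2 * π - θ) :=
        intervalIntegral.integral_congr fun θ _ => (hsymm θ).symm
    _ = ∫ θ in (0 : ℝ)..π, g θ := by
        rw [intervalIntegral.integral_comp_sub_left g]; norm_num [two_mul]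

theorem half_add_inv_sub_half_add_inv {u w : ℂ} (hu : u ≠ 0) (hw : w ≠ 0) :
    (u + u⁻¹) / 2 - (w + w⁻¹) / 2 = (u - w) * (u * w - 1) / (2 * u * w) := by
  field_simp
  ring

theorem Complex.cos_ofReal_eq_half_add_inv (θ : ℝ) :
    Complex.cos θ = (exp (θ * I) + (exp (θ * I))⁻¹) / 2 := by
  rw [Complex.cos, ← Complex.exp_neg, neg_mul]

section

variable {u : ℂ} (hu : 1 < ‖u‖)
include hu

theorem half_add_inv_sub_cos_ne_zero (θ : ℝ) :
    (u + u⁻¹) / 2 - Complex.cos θ ≠ 0 := by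
  have hu0 : u ≠ 0 := norm_pos_iff.mp (one_pos.trans hu)
  have hw : ‖exp (θ * I)‖ = 1 := Complex.norm_exp_ofReal_mul_I θ
  rw [Complex.cos_ofReal_eq_half_add_inv,
    half_add_inv_sub_half_add_inv hu0 (Complex.exp_ne_zero _)]
  refine div_ne_zero (mul_ne_zero ?_ ?_) (by simp [hu0, Complex.exp_ne_zero])
  · rw [sub_ne_zero]; rintro rfl; exact hu.ne' hw
  · rw [sub_ne_zero]; intro h; apply hu.ne'; simpa [hw] using congrArg norm h

theorem integral_exp_nat_mul_div_half_add_inv_sub_cos (m : ℕ) :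
    ∫ θ in (0 : ℝ)..2 * π, exp (m * θ * I) / ((u + u⁻¹) / 2 - Complex.cos θ) =
      4 * π * u⁻¹ ^ m / (u - u⁻¹) := by
  have hu0 : u ≠ 0 := norm_pos_iff.mp (one_pos.trans hu)
  have hinv : u⁻¹ ∈ Metric.ball (0 : ℂ) 1 := by
    rw [mem_ball_zero_iff, norm_inv]; exact inv_lt_one_of_one_lt₀ hu
  have hd : DifferentiableOn ℂ (fun w => w ^ m / (u - w)) (Metric.closedBall 0 1) := by
    refine (differentiableOn_pow m).div (differentiableOn_const u |>.sub differentiableOn_id)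
      fun w hw => sub_ne_zero.mpr ?_
    rintro rfl
    exact (mem_closedBall_zero_iff.mp hw).not_gt hu
  have hcauchy := hd.circleIntegral_sub_inv_smul hinv
  have hintegrand : ∀ θ : ℝ, deriv (circleMap 0 1) θ •
      ((circleMap 0 1 θ - u⁻¹)⁻¹ • (circleMap 0 1 θ ^ m / (u - circleMap 0 1 θ))) =
      I / 2 * (exp (m * θ * I) / ((u + u⁻¹) / 2 - Complex.cos θ)) := by
    intro θ
    have hne := half_add_inv_sub_cos_ne_zero hu θ
    rw [Complex.cos_ofReal_eq_half_add_inv,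
      half_add_inv_sub_half_add_inv hu0 (exp_ne_zero _)] at hne ⊢
    have hm : exp (m * θ * I) = exp (θ * I) ^ m := by rw [← Complex.exp_nat_mul]; ring_nf
    rw [deriv_circleMap, circleMap_zero, ofReal_one, one_mul, hm]
    simp only [smul_eq_mul]
    obtain ⟨h1, h2⟩ := mul_ne_zero_iff.mp (div_ne_zero_iff.mp hne).1
    have h3 : exp (θ * I) - u⁻¹ ≠ 0 := by
      rw [show exp (θ * I) - u⁻¹ = (u * exp (θ * I) - 1) / u by field_simp]
      exact div_ne_zero h2 hu0
    field_simp
  rw [circleIntegral, intervalIntegral.integral_congr fun θ _ => hintegrand θ,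
    intervalIntegral.integral_const_mul, smul_eq_mul] at hcauchy
  have hI : I / 2 ≠ 0 := div_ne_zero I_ne_zero two_ne_zero
  rw [← mul_right_inj' hI, hcauchy]
  field_simp
  norm_num

theorem integral_exp_int_mul_div_half_add_inv_sub_cos (m : ℤ) :
    ∫ θ in (0 : ℝ)..2 * π, exp (m * θ * I) / ((u + u⁻¹) / 2 - Complex.cos θ) =
      4 * π * u⁻¹ ^ m.natAbs / (u - u⁻¹) := by
  obtain ⟨k, rfl | rfl⟩ := Int.eq_nat_or_neg m
  · exact_mod_cast integral_exp_nat_mul_div_half_add_inv_sub_cos hu k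
  · rw [Int.natAbs_neg, Int.natAbs_natCast, ← integral_exp_nat_mul_div_half_add_inv_sub_cos hu k]
    set g : ℝ → ℂ := fun θ => exp (k * θ * I) / ((u + u⁻¹) / 2 - Complex.cos θ)
    calc _ = ∫ θ in (0 : ℝ)..2 * π, g (2 * π - θ) := by
          refine intervalIntegral.integral_congr fun θ _ => ?_
          have hexp : (k : ℂ) * ↑(2 * π - θ) * I = k * (2 * π * I) + -k * θ * I := by
            push_cast; ring
          simp only [g]
          rw [hexp, Complex.exp_add, Complex.exp_nat_mul_two_pi_mul_I, one_mul, ofReal_sub,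
            ofReal_mul, ofReal_ofNat, Complex.cos_two_pi_sub]
          push_cast; rfl
      _ = ∫ θ in (0 : ℝ)..2 * π, g θ := by
          rw [intervalIntegral.integral_comp_sub_left g]; norm_num

theorem integral_cos_pow_div_half_add_inv_sub_cos (n N : ℕ) :
    ∫ θ in (0 : ℝ)..2 * π, Complex.cos (n * θ) ^ N / ((u + u⁻¹) / 2 - Complex.cos θ) =
      4 * π / (2 ^ N * (u - u⁻¹)) *
        ∑ j ∈ Finset.range (N + 1), (N.choose j : ℂ) * u⁻¹ ^ ((2 * j - N : ℤ).natAbs * n) := by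
  have hterm : ∀ j ∈ Finset.range (N + 1), IntervalIntegrable (fun θ : ℝ =>
      (N.choose j : ℂ) / 2 ^ N * (exp (((2 * j - N) * n : ℤ) * θ * I) /
        ((u + u⁻¹) / 2 - Complex.cos θ))) MeasureTheory.volume 0 (2 * π) := fun j _ =>
    (continuous_const.mul ((by fun_prop : Continuous _).div (by fun_prop)
      (half_add_inv_sub_cos_ne_zero hu))).intervalIntegrable _ _
  have hexpand : ∀ θ : ℝ, Complex.cos (n * θ) ^ N / ((u + u⁻¹) / 2 - Complex.cos θ) =
      ∑ j ∈ Finset.range (N + 1), (N.choose j : ℂ) / 2 ^ N *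
        (exp (((2 * j - N) * n : ℤ) * θ * I) / ((u + u⁻¹) / 2 - Complex.cos θ)) := by
    intro θ
    rw [Complex.cos_pow_eq_sum_exp, Finset.sum_div]
    refine Finset.sum_congr rfl fun j _ => ?_
    push_cast
    ring_nf
  rw [intervalIntegral.integral_congr fun θ _ => hexpand θ,
    intervalIntegral.integral_finsetSum hterm, Finset.mul_sum]
  refine Finset.sum_congr rfl fun j _ => ?_
  rw [intervalIntegral.integral_const_mul, integral_exp_int_mul_div_half_add_inv_sub_cos hu,
    Int.natAbs_mul, Int.natAbs_natCast]
  field_simp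

theorem rhoNS_half_add_inv (n s : ℕ) :
    rhoNS n s ((u + u⁻¹) / 2) =
      2 * π * (∑ k ∈ Finset.range (s + 1), (Nat.choose (2 * s + 1) k : ℂ) * u ^ (2 * n * k)) /
        (4 ^ s * u ^ ((2 * s + 1) * n) * (u - u⁻¹)) := by
  set F : ℝ → ℂ := fun θ =>
    Complex.cos (n * θ) ^ (2 * s + 1) / ((u + u⁻¹) / 2 - Complex.cos θ)
  have hsubst : rhoNS n s ((u + u⁻¹) / 2) = ∫ θ in (0 : ℝ)..π, F θ := by
    simp_rw [rhoNS, ← div_div, integral_div_sqrt_one_sub_sq_eq_integral_cos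
        fun t => chebT n t ^ (2 * s + 1) / ((u + u⁻¹) / 2 - t),
      chebT, ofReal_cos, Polynomial.Chebyshev.T_complex_cos]
    rfl
  have hdouble : ∫ θ in (0 : ℝ)..2 * π, F θ = 2 • ∫ θ in (0 : ℝ)..π, F θ := by
    refine intervalIntegral.integral_zero_two_pi_eq_two_nsmul
      (((by fun_prop : Continuous _).div (by fun_prop)
        (half_add_inv_sub_cos_ne_zero hu)).intervalIntegrable _ _) fun θ => ?_
    simp only [F]
    push_cast
    rw [mul_sub, Complex.cos_nat_mul_two_pi_sub, Complex.cos_two_pi_sub]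
  have hpair : ∑ j ∈ Finset.range (2 * s + 1 + 1),
      ((2 * s + 1).choose j : ℂ) * u⁻¹ ^ ((2 * j - (2 * s + 1 : ℕ) : ℤ).natAbs * n) =
      2 • ∑ k ∈ Finset.range (s + 1),
        ((2 * s + 1).choose k : ℂ) * u⁻¹ ^ ((2 * k - (2 * s + 1 : ℕ) : ℤ).natAbs * n) :=
    Finset.sum_range_two_mul_add_two_of_symm s _ fun j hj => by
      rw [Nat.choose_symm hj]
      congr 3
      omega
  have hu0 : u ≠ 0 := norm_pos_iff.mp (one_pos.trans hu)
  have hterm : ∀ k ∈ Finset.range (s + 1),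
      ((2 * s + 1).choose k : ℂ) * u⁻¹ ^ ((2 * k - (2 * s + 1 : ℕ) : ℤ).natAbs * n) =
      ((2 * s + 1).choose k : ℂ) * u ^ (2 * n * k) / u ^ ((2 * s + 1) * n) := by
    intro k hk
    have hk := Finset.mem_range.mp hk
    have hexp : (2 * s + 1) * n = (2 * k - (2 * s + 1 : ℕ) : ℤ).natAbs * n + 2 * n * k := by
      rw [show (2 * k - (2 * s + 1 : ℕ) : ℤ).natAbs = 2 * s + 1 - 2 * k by omega]
      zify [show 2 * k ≤ 2 * s + 1 by omega]
      ring
    rw [hexp, pow_add, inv_pow]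
    field_simp
  rw [hsubst, ← smul_right_inj (two_ne_zero' ℕ), ← hdouble,
    integral_cos_pow_div_half_add_inv_sub_cos hu, hpair, Finset.sum_congr rfl hterm,
    ← Finset.sum_div, pow_succ, pow_mul]
  simp only [nsmul_eq_mul]
  field_simp
  ring

end

theorem stmt3_general (n s : ℕ) (u : ℂ) (hu : 1 < ‖u‖)
    (z : ℂ) (hz : z = (u + u⁻¹) / 2) :
    kerK n s z =
      2 * (π:ℂ) * (∑ k ∈ Finset.range (s + 1), (Nat.choose (2*s+1) k : ℂ) * u ^ (2*n*k)) /
        (u ^ ((2*s+1)*n) * (u ^ n + u ^ (-(n:ℤ))) ^ (2*s) * (u - u⁻¹)) := by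
  rw [hz, kerK, rhoNS_half_add_inv hu, chebT_half_add_inv n (norm_pos_iff.mp (one_pos.trans hu)),
    zpow_neg, zpow_natCast, ← inv_pow, div_pow,
    show (4 : ℂ) ^ s = 2 ^ (2 * s) by norm_num [pow_mul]]
  field_simp

/-- For `n ≥ 1`, `s ≥ 1`, `|u| > 1` and `z = (u + u⁻¹)/2`,
`K_{n,s}(z) = 2π Σ_{k=0}^{s} C(2s+1, k) u^(2nk) /
  (u^((2s+1)n) (u^n + u^(−n))^(2s) (u − u⁻¹))`. -/
theorem stmt3 (n s : ℕ) (hn : 1 ≤ n) (hs : 1 ≤ s) (u : ℂ) (hu : 1 < ‖u‖)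
    (z : ℂ) (hz : z = (u + u⁻¹) / 2) :
    kerK n s z =
      2 * (π:ℂ) * (∑ k ∈ Finset.range (s + 1), (Nat.choose (2*s+1) k : ℂ) * u ^ (2*n*k)) /
        (u ^ ((2*s+1)*n) * (u ^ n + u ^ (-(n:ℤ))) ^ (2*s) * (u - u⁻¹)) :=
  stmt3_general n s u hu z hz
end

section
/- (Lemma 3) Let s ≥ 1 and m ≥ 0 be integers. Then for every integer t ≥ 0, Σ_{i=0}^{t} (−1)^i C(m+s−1+i, 2s−1) C(2s+1, i) = (−1)^t · [(s(2m+2s+2) − t) / ((m+s)(m+s+1))] · C(m+s+t, 2s) · C(2s, t), as an identity of rational numbers. -/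
/-!
Write `n = m + s` and `k = 2s`. The identity holds for all `n, k ≥ 1`, and is proved by induction
on `t`: the increment of the right-hand side from `t` to `t + 1` is, after Pascal's rule on both
binomial coefficients, a polynomial identity in `C(n+t, k)`, `C(n+t, k-1)`, `C(k, t+1)`, `C(k, t)`
that follows from the ratio identities `k C(N, k) = (N - k + 1) C(N, k - 1)` and
`(t + 1) C(k, t + 1) = (k - t) C(k, t)`.
-/

theorem Nat.cast_add_one_mul_choose_succ {R : Type*} [CommRing R] (N k : ℕ) :
    ((k : R) + 1) * (N.choose (k + 1) : R) = ((N : R) - k) * (N.choose k : R) := by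
  rcases le_or_gt k N with h | h
  · have := congrArg (Nat.cast : ℕ → R) (Nat.choose_succ_right_eq N k)
    push_cast [Nat.cast_sub h] at this
    linear_combination this
  · simp [Nat.choose_eq_zero_of_lt h, Nat.choose_eq_zero_of_lt (Nat.lt_succ_of_lt h)]

/-- The induction step, with `a, b = C(N+t, κ), C(N+t, κ-1)` and `p, q = C(κ, t+1), C(κ, t)`,
multiplied by `(-1)^(t+1) N (N+1)`. -/
theorem sum_choose_mul_choose_step {F : Type*} [Field F] {N κ t a b p q : F} (hκ : κ ≠ 0)
    (ht : t + 1 ≠ 0) (hp : (t + 1) * p = (κ - t) * q) (ha : κ * a = (N + t + 1 - κ) * b) :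
    (κ * (N + 1) - t - 1) * (a + b) * p + (κ * (N + 1) - t) * a * q =
      N * (N + 1) * b * (p + q) := by
  apply mul_left_cancel₀ (mul_ne_zero hκ ht)
  linear_combination
    ((κ * (N + 1) - t - 1) * κ * a + (κ * (N + 1) - t - 1 - N * (N + 1)) * κ * b) * hp
      + q * ((κ - t) * (κ * (N + 1) - t - 1) + (κ * (N + 1) - t) * (t + 1)) * ha

theorem sum_range_neg_one_pow_mul_choose_mul_choose (n k t : ℕ) (hn : 0 < n) (hk : 0 < k) :
    ∑ i ∈ Finset.range (t + 1), (-1 : ℚ) ^ i * (n - 1 + i).choose (k - 1) * (k + 1).choose i =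
      (-1 : ℚ) ^ t * ((k * (n + 1) - t) / (n * (n + 1))) * (n + t).choose k * k.choose t := by
  obtain ⟨n, rfl⟩ := Nat.exists_eq_add_one_of_ne_zero hn.ne'
  obtain ⟨k, rfl⟩ := Nat.exists_eq_add_one_of_ne_zero hk.ne'
  simp only [Nat.add_sub_cancel]
  push_cast
  have hD : ((n : ℚ) + 1) * (n + 1 + 1) ≠ 0 := by positivity
  induction t with
  | zero =>
    have h := congrArg (Nat.cast : ℕ → ℚ) (Nat.add_one_mul_choose_eq n k)
    push_cast at h
    simp only [zero_add, Finset.sum_range_one, pow_zero, add_zero, one_mul,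
      Nat.choose_zero_right, Nat.cast_one, mul_one, CharP.cast_eq_zero, sub_zero]
    field_simp
    linear_combination h
  | succ t ih =>
    rw [Finset.sum_range_succ, ih]
    have hpascal_top : (n + 1 + (t + 1)).choose (k + 1) =
        (n + 1 + t).choose k + (n + 1 + t).choose (k + 1) := Nat.choose_succ_succ' _ _
    have hpascal_bot : (k + 1 + 1).choose (t + 1) = (k + 1).choose t + (k + 1).choose (t + 1) :=
      Nat.choose_succ_succ' _ _
    have hp := Nat.cast_add_one_mul_choose_succ (R := ℚ) (k + 1) t
    have ha := Nat.cast_add_one_mul_choose_succ (R := ℚ) (n + 1 + t) k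
    push_cast at hp ha
    have key := sum_choose_mul_choose_step (N := (n : ℚ) + 1) (κ := (k : ℚ) + 1) (t := t)
      (a := (n + 1 + t).choose (k + 1)) (b := (n + 1 + t).choose k)
      (p := (k + 1).choose (t + 1)) (q := (k + 1).choose t) (by positivity) (by positivity)
      hp (by linear_combination ha)
    rw [hpascal_top, hpascal_bot, show n + (t + 1) = n + 1 + t by ring]
    push_cast
    field_simp
    linear_combination (-1 : ℚ) ^ t * key

/-- (Lemma 3) For integers `s ≥ 1`, `m ≥ 0`, `t ≥ 0`:
`Σ_{i=0}^{t} (−1)^i C(m+s−1+i, 2s−1) C(2s+1, i)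
  = (−1)^t (s(2m+2s+2) − t)/((m+s)(m+s+1)) · C(m+s+t, 2s) · C(2s, t)`
as an identity of rational numbers. -/
theorem stmt7 (s m t : ℕ) (hs : 1 ≤ s) :
    ∑ i ∈ Finset.range (t + 1),
        (-1 : ℚ)^i * (Nat.choose (m + s - 1 + i) (2*s - 1) : ℚ) * (Nat.choose (2*s+1) i : ℚ) =
      (-1 : ℚ)^t * (((s : ℚ) * (2*m + 2*s + 2) - t) / (((m : ℚ) + s) * ((m : ℚ) + s + 1))) *
        (Nat.choose (m + s + t) (2*s) : ℚ) * (Nat.choose (2*s) t : ℚ) := by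
  rw [sum_range_neg_one_pow_mul_choose_mul_choose (m + s) (2 * s) t (by omega) (by omega)]
  push_cast
  ring
end

section
/- Let s ≥ 1 and m ≥ 0 be integers. Then Σ_{i=0}^{s} (−1)^i C(m+s−1+i, 2s−1) C(2s+1, i) = (−1)^s · [s(2m+2s+1) / ((m+s)(m+s+1))] · C(m+2s, 2s) · C(2s, s), as an identity of rational numbers. -/
/-!
Zeilberger–Gosper telescoping: with `t i` the `i`-th summand and `D = 2s(2s+1)(m+s)(m+s+1)`,
the hypergeometric term `G i = i (m+i-s) (i - 2s(m+s+1) - 1) · t i` satisfies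
`G (i+1) - G i = D · t i`, because the ratio `t (i+1) / t i` has denominator `(i+1)(m+i+1-s)`,
which is exactly the polynomial factor that `G (i+1)` carries. Hence `D · Σ t = G (s+1)`, and
`G (s+1)` is a product of binomials that becomes the right-hand side after shifting
`C(2s+1, s+1)` to `C(2s, s)` and `C(m+2s, 2s-1)` to `C(m+2s, 2s)`.
-/

open Finset

section CastChoose

variable {R : Type*} [CommRing R]

theorem Nat.cast_choose_succ_right_mul (n k : ℕ) :
    (n.choose (k + 1) : R) * (k + 1) = n.choose k * (n - k) := by
  rcases le_or_gt k n with hk | hk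
  · exact_mod_cast congrArg (Nat.cast : ℕ → R) (Nat.choose_succ_right_eq n k)
  · simp [Nat.choose_eq_zero_of_lt hk, Nat.choose_eq_zero_of_lt (Nat.lt_succ_of_lt hk)]

theorem Nat.cast_choose_mul_succ (n k : ℕ) :
    (n.choose k : R) * (n + 1) = (n + 1).choose k * (n + 1 - k) := by
  rcases le_or_gt k (n + 1) with hk | hk
  · exact_mod_cast congrArg (Nat.cast : ℕ → R) (Nat.choose_mul_succ_eq n k)
  · simp [Nat.choose_eq_zero_of_lt hk, Nat.choose_eq_zero_of_lt (Nat.lt_of_succ_lt hk)]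

end CastChoose

namespace AlternatingChooseSum

def summand (s m i : ℕ) : ℚ :=
  (-1 : ℚ) ^ i * (Nat.choose (m + s - 1 + i) (2 * s - 1) : ℚ) * (Nat.choose (2 * s + 1) i : ℚ)

theorem summand_succ_mul {s : ℕ} (hs : 1 ≤ s) (m i : ℕ) :
    summand s m (i + 1) * ((i + 1) * (m + i + 1 - s)) =
      -summand s m i * ((m + s + i) * (2 * s + 1 - i)) := by
  have hlower := Nat.cast_choose_succ_right_mul (R := ℚ) (2 * s + 1) i
  have hupper := Nat.cast_choose_mul_succ (R := ℚ) (m + s - 1 + i) (2 * s - 1)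
  rw [show m + s - 1 + i + 1 = m + s - 1 + (i + 1) by omega] at hupper
  unfold summand
  push_cast [Nat.cast_sub (by omega : 1 ≤ m + s), Nat.cast_sub (by omega : 1 ≤ 2 * s)] at hlower hupper
  rw [pow_succ]
  linear_combination
    (-(-1) ^ i * ((m + s - 1 + (i + 1)).choose (2 * s - 1) : ℚ) * (m + i + 1 - s)) * hlower +
      ((-1) ^ i * ((2 * s + 1).choose i : ℚ) * (2 * s + 1 - i)) * hupper

def certificate (s m i : ℕ) : ℚ :=
  i * (m + i - s) * (i - 2 * s * (m + s + 1) - 1) * summand s m i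

theorem certificate_succ_sub {s : ℕ} (hs : 1 ≤ s) (m i : ℕ) :
    certificate s m (i + 1) - certificate s m i =
      2 * s * (2 * s + 1) * (m + s) * (m + s + 1) * summand s m i := by
  unfold certificate
  push_cast
  linear_combination ((i : ℚ) + 1 - 2 * s * (m + s + 1) - 1) * summand_succ_mul hs m i

theorem sum_summand_mul {s : ℕ} (hs : 1 ≤ s) (m : ℕ) :
    2 * s * (2 * s + 1) * (m + s) * (m + s + 1) * ∑ i ∈ range (s + 1), summand s m i =
      certificate s m (s + 1) := by
  rw [mul_sum, ← sum_congr rfl fun i _ ↦ certificate_succ_sub hs m i, sum_range_sub]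
  simp [certificate]

theorem certificate_succ_self {s : ℕ} (hs : 1 ≤ s) (m : ℕ) :
    certificate s m (s + 1) =
      (-1) ^ s * (s * (2 * m + 2 * s + 1)) * (2 * s * (2 * s + 1)) *
        (m + 2 * s).choose (2 * s) * (2 * s).choose s := by
  have hlower : ((2 * s + 1).choose (s + 1) : ℚ) * (s + 1) = (2 * s + 1) * (2 * s).choose s := by
    exact_mod_cast (Nat.add_one_mul_choose_eq (2 * s) s).symm
  have hupper := Nat.cast_choose_succ_right_mul (R := ℚ) (m + 2 * s) (2 * s - 1)
  rw [Nat.sub_add_cancel (by omega : 1 ≤ 2 * s)] at hupper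
  unfold certificate summand
  rw [show m + s - 1 + (s + 1) = m + 2 * s by omega, pow_succ]
  push_cast [Nat.cast_sub (by omega : 1 ≤ 2 * s)] at hupper ⊢
  linear_combination (-1 : ℚ) ^ s * (s * (2 * m + 2 * s + 1)) *
    (((m + 2 * s).choose (2 * s - 1) * (m + 1) : ℚ) * hlower -
      ((2 * s + 1) * (2 * s).choose s : ℚ) * hupper)

end AlternatingChooseSum

open AlternatingChooseSum in
/-- For integers `s ≥ 1`, `m ≥ 0`:
`Σ_{i=0}^{s} (−1)^i C(m+s−1+i, 2s−1) C(2s+1, i)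
  = (−1)^s · s(2m+2s+1)/((m+s)(m+s+1)) · C(m+2s, 2s) · C(2s, s)`
as an identity of rational numbers. -/
theorem stmt8 (s m : ℕ) (hs : 1 ≤ s) :
    ∑ i ∈ Finset.range (s + 1),
        (-1 : ℚ)^i * (Nat.choose (m + s - 1 + i) (2*s - 1) : ℚ) * (Nat.choose (2*s+1) i : ℚ) =
      (-1 : ℚ)^s * ((s : ℚ) * (2*m + 2*s + 1) / (((m : ℚ) + s) * ((m : ℚ) + s + 1))) *
        (Nat.choose (m + 2*s) (2*s) : ℚ) * (Nat.choose (2*s) s : ℚ) := by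
  have hD : 2 * s * (2 * s + 1) * ((m : ℚ) + s) * (m + s + 1) ≠ 0 := by positivity
  change ∑ i ∈ range (s + 1), summand s m i = _
  apply mul_left_cancel₀ hD
  rw [sum_summand_mul hs m, certificate_succ_self hs m]
  field_simp
end

section
/- Let n ≥ 1, s ≥ 1 be integers, ρ > 1, M ≥ 0, and let (α_k)_{k∈ℕ} be complex numbers with |α_k| ≤ 2M ρ^{−k} for all k. Then the series Σ_{m=0}^{∞} α_{(2s+1)n + 2mn} ε_m converges absolutely and |Σ_{m=0}^{∞} α_{(2s+1)n + 2mn} ε_m| ≤ 2πM · (Σ_{k=0}^{s} (−1)^k C(2s+1, s−k) ρ^{2n(s−k)}) / (ρ^n (ρ^{2n} − 1)^{2s}). -/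
open Real

/-- `ε_m = π (−1)^m [s(2m+2s+1) / ((m+s)(m+s+1))] C(m+2s, 2s) C(2s, s)`. -/
noncomputable def epsCoef (s m : ℕ) : ℝ :=
  π * (-1)^m * ((s : ℝ) * (2*(m:ℝ) + 2*s + 1) / (((m:ℝ) + s) * ((m:ℝ) + s + 1))) *
    (Nat.choose (m + 2*s) (2*s) : ℝ) * (Nat.choose (2*s) s : ℝ)

/-!
Up to the factor `π / (s! (s-1)!)`, `|ε_m|` is the value at `m` of a polynomial `P = epsPoly s`
of degree `2s - 1`, so `(1 - r)^(2s) Σ_m |ε_m| r^m` is a polynomial in `r` whose `k`-th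
coefficient is the partial alternating sum `Σ_{j ≤ k} (-1)^j C(2s, j) P(k - j)`. As the `2s`-th
forward difference of `P` vanishes, this equals minus the complementary part of the full
difference, which only involves the values of `P` at `-1, …, -2s`. There `P` vanishes except at
`-s` and `-(s+1)`, and Pascal's rule gives the coefficient `(-1)^k C(2s+1, s-k) s! (s-1)!`.
The theorem follows by comparing the series term by term with `Σ_m |ε_m| r^m` at `r = ρ^(-2n)`.
-/

open Polynomial Finset
open scoped Nat fwdDiff

namespace Polynomial

variable {R : Type*} [CommRing R]

theorem sum_range_neg_one_pow_mul_choose_mul_eval_sub {P : R[X]} {N : ℕ}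
    (hP : P.natDegree < N) (x : R) :
    ∑ j ∈ range (N + 1), (-1) ^ j * N.choose j * P.eval (x - j) = 0 := by
  have h := congrFun (fwdDiff_iter_eq_zero_of_degree_lt hP) (x - N)
  rw [fwdDiff_iter_eq_sum_shift, ← sum_range_reflect, Pi.zero_apply] at h
  rw [← h]
  refine sum_congr rfl fun j hj => ?_
  have hjN : j ≤ N := Nat.lt_succ_iff.mp (mem_range.mp hj)
  rw [Nat.add_sub_cancel, Nat.sub_sub_self hjN, Nat.choose_symm hjN, zsmul_eq_mul, nsmul_eq_mul,
    Nat.cast_sub hjN]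
  push_cast
  ring_nf

theorem sum_range_succ_neg_one_pow_mul_choose_mul_eval_sub_eq_sum_eval_neg {P : R[X]} {N : ℕ}
    (hP : P.natDegree < N) (k : ℕ) :
    ∑ j ∈ range (k + 1), (-1) ^ j * N.choose j * P.eval ((k : R) - j) =
      ∑ v ∈ range N, (-1) ^ (k + v) * N.choose (k + 1 + v) * P.eval (-(v + 1 : R)) := by
  set f : ℕ → R := fun j => (-1) ^ j * N.choose j * P.eval ((k : R) - j)
  have hsum : ∑ j ∈ range (k + 1 + N), f j = 0 := by
    rw [← sum_range_neg_one_pow_mul_choose_mul_eval_sub hP (k : R)]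
    refine (sum_subset (range_subset_range.mpr (by omega)) fun j _ hj => ?_).symm
    simp [f, Nat.choose_eq_zero_of_lt (show N < j by simp at hj; omega)]
  rw [sum_range_add] at hsum
  rw [eq_neg_of_add_eq_zero_left hsum, ← sum_neg_distrib]
  refine sum_congr rfl fun v _ => ?_
  simp only [f]
  push_cast
  ring_nf

theorem summable_eval_mul_pow (P : ℝ[X]) {r : ℝ} (hr : |r| < 1) :
    Summable fun m : ℕ => P.eval (m : ℝ) * r ^ m := by
  have h : (fun m : ℕ => P.eval (m : ℝ) * r ^ m) =
      fun m : ℕ => ∑ i ∈ range (P.natDegree + 1), P.coeff i * ((m : ℝ) ^ i * r ^ m) := by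
    ext m
    rw [eval_eq_sum_range, sum_mul]
    exact sum_congr rfl fun i _ => mul_assoc _ _ _
  rw [h]
  have hr' : ‖r‖ < 1 := by rwa [Real.norm_eq_abs]
  exact summable_sum fun i _ => (summable_pow_mul_geometric_of_norm_lt_one i hr').mul_left _

theorem tsum_eval_mul_pow_mul_one_sub_pow {P : ℝ[X]} {N : ℕ} (hP : P.natDegree < N) {r : ℝ}
    (hr : |r| < 1) :
    (∑' m : ℕ, P.eval (m : ℝ) * r ^ m) * (1 - r) ^ N =
      ∑ k ∈ range N, (∑ v ∈ range N,
        (-1) ^ (k + v) * N.choose (k + 1 + v) * P.eval (-(v + 1 : ℝ))) * r ^ k := by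
  set b : ℕ → ℝ := fun j => (-1) ^ j * N.choose j * r ^ j
  have hb : ∀ j ∉ range (N + 1), b j = 0 := fun j hj => by
    simp [b, Nat.choose_eq_zero_of_lt (show N < j by simp at hj; omega)]
  have hpow : (1 - r) ^ N = ∑' j, b j := by
    rw [tsum_eq_sum hb, sub_eq_neg_add, add_pow]
    exact sum_congr rfl fun j _ => by rw [neg_pow, one_pow, mul_one]; ring
  have hcoeff : ∀ k, ∑ i ∈ range (k + 1), P.eval (i : ℝ) * r ^ i * b (k - i) =
      (∑ v ∈ range N, (-1) ^ (k + v) * N.choose (k + 1 + v) * P.eval (-(v + 1 : ℝ))) *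
        r ^ k := by
    intro k
    rw [← sum_range_succ_neg_one_pow_mul_choose_mul_eval_sub_eq_sum_eval_neg hP k, sum_mul,
      ← sum_range_reflect]
    refine sum_congr rfl fun j hj => ?_
    have hjk : j ≤ k := Nat.lt_succ_iff.mp (mem_range.mp hj)
    simp only [b, Nat.add_sub_cancel, Nat.sub_sub_self hjk, Nat.cast_sub hjk]
    rw [← Nat.sub_add_cancel hjk, pow_add, Nat.add_sub_cancel]
    ring
  have hvanish : ∀ k ∉ range N, (∑ v ∈ range N,
      (-1) ^ (k + v) * N.choose (k + 1 + v) * P.eval (-(v + 1 : ℝ))) * r ^ k = 0 := fun k hk => by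
    rw [sum_eq_zero fun v _ => by
      rw [Nat.choose_eq_zero_of_lt (show N < k + 1 + v by simp at hk; omega)]; simp, zero_mul]
  rw [hpow, tsum_mul_tsum_eq_tsum_sum_range_of_summable_norm, tsum_congr hcoeff,
    tsum_eq_sum hvanish]
  · exact summable_abs_iff.mpr (summable_eval_mul_pow P hr)
  · exact summable_of_ne_finset_zero (s := range (N + 1)) fun j hj => by simp [hb j hj]

end Polynomial

theorem ascPochhammer_eval_neg_natCast {R : Type*} [Ring R] (n k : ℕ) :
    (ascPochhammer R k).eval (-(n : R)) = (-1) ^ k * n.descFactorial k := by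
  rw [ascPochhammer_eval_neg_eq_descPochhammer, descPochhammer_eval_eq_descFactorial]

theorem Nat.succ_ascFactorial_two_mul {s : ℕ} (hs : 1 ≤ s) (m : ℕ) :
    (m + 1).ascFactorial (2 * s) =
      (m + 1).ascFactorial (s - 1) * ((m + s) * (m + s + 1)) *
        (m + s + 2).ascFactorial (s - 1) := by
  obtain ⟨t, rfl⟩ : ∃ t, s = t + 1 := ⟨s - 1, by omega⟩
  rw [show 2 * (t + 1) = t + 2 + t by ring, ← Nat.ascFactorial_mul_ascFactorial,
    ← Nat.ascFactorial_mul_ascFactorial]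
  simp only [Nat.add_sub_cancel, Nat.ascFactorial_succ, Nat.ascFactorial_zero]
  ring_nf

theorem Nat.mul_choose_mul_choose_mul_factorial_eq_ascFactorial {s : ℕ} (hs : 1 ≤ s) (m : ℕ) :
    s * (m + 2 * s).choose (2 * s) * (2 * s).choose s * (s ! * (s - 1)!) =
      (m + 1).ascFactorial (2 * s) := by
  have hcentral := Nat.add_choose_mul_factorial_mul_factorial s s
  rw [← two_mul] at hcentral
  rw [Nat.ascFactorial_eq_factorial_mul_choose, ← hcentral,
    ← Nat.mul_factorial_pred (by omega : s ≠ 0)]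
  ring

theorem inv_pow_mul_sum_div_one_sub_inv_pow {R : ℝ} (hR : 1 < R) (s : ℕ) (c : ℕ → ℝ) :
    R⁻¹ ^ s * ((∑ k ∈ range (s + 1), c k * R⁻¹ ^ k) / (1 - R⁻¹) ^ (2 * s)) =
      (∑ k ∈ range (s + 1), c k * R ^ (s - k)) / (R - 1) ^ (2 * s) := by
  have hsum : R⁻¹ ^ s * ∑ k ∈ range (s + 1), c k * R⁻¹ ^ k =
      R⁻¹ ^ (2 * s) * ∑ k ∈ range (s + 1), c k * R ^ (s - k) := by
    rw [mul_sum, mul_sum]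
    refine sum_congr rfl fun k hk => ?_
    have hks : k ≤ s := Nat.lt_succ_iff.mp (mem_range.mp hk)
    rw [show 2 * s = (s - k) + (s + k) by omega, pow_add, pow_add, inv_pow, inv_pow R (s - k)]
    field_simp
  rw [← mul_div_assoc, hsum, show 1 - R⁻¹ = R⁻¹ * (R - 1) by field_simp, mul_pow,
    mul_div_mul_left _ _ (by positivity)]

/-- `(2X + 2s + 1) (X + 1) ⋯ (X + s - 1) (X + s + 2) ⋯ (X + 2s)`: the factor
`(2m + 2s + 1) / ((m + s)(m + s + 1))` of `ε_m` cancels two factors of `(m + 1) ⋯ (m + 2s)`. -/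
noncomputable def epsPoly (s : ℕ) : ℝ[X] :=
  (2 * X + C (2 * s + 1 : ℝ)) * (ascPochhammer ℝ (s - 1)).comp (X + 1) *
    (ascPochhammer ℝ (s - 1)).comp (X + C (s + 2 : ℝ))

theorem eval_epsPoly (s : ℕ) (x : ℝ) :
    (epsPoly s).eval x = (2 * x + 2 * s + 1) * (ascPochhammer ℝ (s - 1)).eval (x + 1) *
      (ascPochhammer ℝ (s - 1)).eval (x + s + 2) := by
  simp only [epsPoly, eval_mul, eval_comp, eval_add, eval_X, eval_C, eval_one, eval_ofNat]
  ring_nf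

theorem natDegree_epsPoly_lt {s : ℕ} (hs : 1 ≤ s) : (epsPoly s).natDegree < 2 * s := by
  have hpoch : ∀ c : ℝ, ((ascPochhammer ℝ (s - 1)).comp (X + C c)).natDegree ≤ s - 1 :=
    fun c => natDegree_comp_le.trans (by rw [ascPochhammer_natDegree, natDegree_X_add_C, mul_one])
  have h2 : (2 * X + C (2 * s + 1 : ℝ)).natDegree ≤ 1 := by compute_degree
  unfold epsPoly
  calc _ ≤ 1 + (s - 1) + (s - 1) := by
        refine natDegree_mul_le.trans (add_le_add (natDegree_mul_le.trans
          (add_le_add h2 ?_)) (hpoch _))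
        simpa using hpoch 1
    _ < 2 * s := by omega

theorem abs_epsCoef {s : ℕ} (hs : 1 ≤ s) (m : ℕ) :
    |epsCoef s m| = π * (epsPoly s).eval (m : ℝ) / (s ! * (s - 1)! : ℝ) := by
  have hkey : ((m + 1).ascFactorial (s - 1) * ((m + s) * (m + s + 1)) *
      (m + s + 2).ascFactorial (s - 1) : ℝ) =
      s * (m + 2 * s).choose (2 * s) * (2 * s).choose s * (s ! * (s - 1)!) := by
    exact_mod_cast (Nat.succ_ascFactorial_two_mul hs m).symm.trans
      (Nat.mul_choose_mul_choose_mul_factorial_eq_ascFactorial hs m).symm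
  rw [Nat.cast_ascFactorial ℝ, Nat.cast_ascFactorial ℝ] at hkey
  have hpos : (0 : ℝ) < (m + s) * (m + s + 1) := by positivity
  rw [epsCoef, abs_mul, abs_mul, abs_mul, abs_mul, abs_pow, abs_neg, abs_one, one_pow, mul_one,
    abs_of_pos pi_pos, abs_of_nonneg (by positivity), Nat.abs_cast, Nat.abs_cast, eval_epsPoly,
    eq_div_iff (by positivity)]
  field_simp
  push_cast at hkey
  linear_combination -hkey

theorem epsPoly_eval_neg_eq_zero {s v : ℕ} (hv : 1 ≤ v) (hv' : v ≤ 2 * s) (hvs : v ≠ s)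
    (hvs' : v ≠ s + 1) : (epsPoly s).eval (-(v : ℝ)) = 0 := by
  rw [eval_epsPoly]
  rcases lt_or_gt_of_ne hvs with hlt | hgt
  · have h : -(v : ℝ) + 1 = -((v - 1 : ℕ) : ℝ) := by push_cast [Nat.cast_sub hv]; ring
    rw [h, ascPochhammer_eval_neg_coe_nat_of_lt (by omega), mul_zero, zero_mul]
  · have h : -(v : ℝ) + s + 2 = -((v - (s + 2) : ℕ) : ℝ) := by
      push_cast [Nat.cast_sub (show s + 2 ≤ v by omega)]; ring
    rw [h, ascPochhammer_eval_neg_coe_nat_of_lt (by omega), mul_zero]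

theorem epsPoly_eval_neg_self {s : ℕ} (hs : 1 ≤ s) :
    (epsPoly s).eval (-(s : ℝ)) = (-1) ^ (s + 1) * (s ! * (s - 1)! : ℝ) := by
  obtain ⟨t, rfl⟩ : ∃ t, s = t + 1 := ⟨s - 1, by omega⟩
  have h1 : -((t + 1 : ℕ) : ℝ) + 1 = -(t : ℝ) := by push_cast; ring
  have h2 : -((t + 1 : ℕ) : ℝ) + (t + 1 : ℕ) + 2 = (1 : ℕ) + 1 := by push_cast; ring
  have h3 : (ascPochhammer ℝ t).eval ((1 : ℕ) + 1 : ℝ) = (t + 1)! := by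
    simpa [add_comm] using factorial_mul_ascPochhammer ℝ 1 t
  rw [eval_epsPoly, Nat.add_sub_cancel, h1, h2, ascPochhammer_eval_neg_natCast,
    Nat.descFactorial_self, h3]
  push_cast
  ring

theorem epsPoly_eval_neg_succ {s : ℕ} (hs : 1 ≤ s) :
    (epsPoly s).eval (-((s + 1 : ℕ) : ℝ)) = (-1) ^ s * (s ! * (s - 1)! : ℝ) := by
  obtain ⟨t, rfl⟩ : ∃ t, s = t + 1 := ⟨s - 1, by omega⟩
  have h1 : -((t + 1 + 1 : ℕ) : ℝ) + 1 = -((t + 1 : ℕ) : ℝ) := by push_cast; ring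
  have h2 : -((t + 1 + 1 : ℕ) : ℝ) + (t + 1 : ℕ) + 2 = 1 := by push_cast; ring
  have hdesc : (t + 1).descFactorial t = (t + 1)! := by
    simpa [Nat.add_sub_cancel_left] using Nat.factorial_mul_descFactorial (Nat.le_succ t)
  rw [eval_epsPoly, Nat.add_sub_cancel, h1, h2, ascPochhammer_eval_neg_natCast, hdesc,
    ascPochhammer_eval_one]
  push_cast
  ring

theorem sum_range_neg_one_pow_mul_choose_mul_epsPoly_eval_neg {s : ℕ} (hs : 1 ≤ s) (k : ℕ) :
    ∑ v ∈ range (2 * s), (-1) ^ (k + v) * ((2 * s).choose (k + 1 + v) : ℝ) *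
        (epsPoly s).eval (-(v + 1 : ℝ)) =
      (-1) ^ k * (s ! * (s - 1)! : ℝ) * (2 * s + 1).choose (k + s + 1) := by
  obtain ⟨t, rfl⟩ : ∃ t, s = t + 1 := ⟨s - 1, by omega⟩
  have hcast : ∀ v : ℕ, -(v + 1 : ℝ) = -((v + 1 : ℕ) : ℝ) := fun v => by push_cast; ring
  simp only [hcast]
  rw [sum_eq_add_of_mem t (t + 1) (mem_range.mpr (by omega)) (mem_range.mpr (by omega)) (by omega)
    fun v hv hne => by
      rw [epsPoly_eval_neg_eq_zero (by omega) (by simp at hv; omega) (by omega) (by omega),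
        mul_zero],
    epsPoly_eval_neg_self hs, epsPoly_eval_neg_succ hs,
    show k + (t + 1) + 1 = (k + 1 + t) + 1 by ring, Nat.choose_succ_succ']
  push_cast
  ring_nf
  rw [Even.neg_one_pow (n := t * 2) ⟨t, by ring⟩]
  ring

theorem tsum_epsPoly_eval_mul_pow_mul_one_sub_pow {s : ℕ} (hs : 1 ≤ s) {r : ℝ}
    (hr : |r| < 1) :
    (∑' m : ℕ, (epsPoly s).eval (m : ℝ) * r ^ m) * (1 - r) ^ (2 * s) =
      (s ! * (s - 1)! : ℝ) *
        ∑ k ∈ range (s + 1), (-1) ^ k * ((2 * s + 1).choose (s - k) : ℝ) * r ^ k := by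
  rw [tsum_eval_mul_pow_mul_one_sub_pow (natDegree_epsPoly_lt hs) hr, mul_sum]
  simp only [sum_range_neg_one_pow_mul_choose_mul_epsPoly_eval_neg hs]
  refine (sum_subset (range_subset_range.mpr (by omega)) fun k _ hk => ?_).symm.trans
    (sum_congr rfl fun k hk => ?_)
  · rw [Nat.choose_eq_zero_of_lt (by simp at hk; omega)]
    simp
  · rw [Nat.choose_symm_of_eq_add (show 2 * s + 1 = (k + s + 1) + (s - k) by simp at hk; omega)]
    ring

theorem hasSum_abs_epsCoef_mul_pow {s : ℕ} (hs : 1 ≤ s) {r : ℝ} (hr : |r| < 1) :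
    HasSum (fun m : ℕ => |epsCoef s m| * r ^ m)
      (π * (∑ k ∈ range (s + 1), (-1) ^ k * ((2 * s + 1).choose (s - k) : ℝ) * r ^ k) /
        (1 - r) ^ (2 * s)) := by
  have hr1 : (1 - r) ^ (2 * s) ≠ 0 := pow_ne_zero _ (by linarith [le_abs_self r])
  have h := ((summable_eval_mul_pow (epsPoly s) hr).hasSum.mul_left (π / (s ! * (s - 1)! : ℝ)))
  have hterm : (fun m : ℕ => |epsCoef s m| * r ^ m) =
      fun m : ℕ => π / (s ! * (s - 1)! : ℝ) * ((epsPoly s).eval (m : ℝ) * r ^ m) := by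
    ext m
    rw [abs_epsCoef hs]
    ring
  rw [hterm, div_eq_of_eq_mul hr1]
  · exact h
  · rw [mul_assoc, tsum_epsPoly_eval_mul_pow_mul_one_sub_pow hs hr]
    field_simp

theorem norm_mul_epsCoef_le {n s : ℕ} {ρ M : ℝ} {α : ℕ → ℂ}
    (hα : ∀ k : ℕ, ‖α k‖ ≤ 2 * M * ρ ^ (-(k:ℤ))) (m : ℕ) :
    ‖α ((2*s+1)*n + 2*m*n) * (epsCoef s m : ℂ)‖ ≤
      2 * M * (ρ ^ n)⁻¹ * (ρ ^ (2 * n))⁻¹ ^ s * (|epsCoef s m| * (ρ ^ (2 * n))⁻¹ ^ m) := by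
  have hpow : ρ ^ (-(((2*s+1)*n + 2*m*n : ℕ) : ℤ)) =
      (ρ ^ n)⁻¹ * (ρ ^ (2 * n))⁻¹ ^ s * (ρ ^ (2 * n))⁻¹ ^ m := by
    rw [zpow_neg, zpow_natCast, show (2*s+1)*n + 2*m*n = n + 2*n*s + 2*n*m by ring,
      pow_add, pow_add, pow_mul ρ (2 * n), pow_mul ρ (2 * n), mul_inv, mul_inv, inv_pow, inv_pow]
  rw [norm_mul, Complex.norm_real, Real.norm_eq_abs]
  calc _ ≤ 2 * M * ρ ^ (-(((2*s+1)*n + 2*m*n : ℕ) : ℤ)) * |epsCoef s m| :=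
        mul_le_mul_of_nonneg_right (hα _) (abs_nonneg _)
    _ = _ := by rw [hpow]; ring

theorem stmt10_general (n s : ℕ) (hn : 1 ≤ n) (hs : 1 ≤ s) (ρ : ℝ) (hρ : 1 < ρ)
    (M : ℝ) (α : ℕ → ℂ)
    (hα : ∀ k : ℕ, ‖α k‖ ≤ 2 * M * ρ ^ (-(k:ℤ))) :
    Summable (fun m : ℕ => ‖(α ((2*s+1)*n + 2*m*n)) * (epsCoef s m : ℂ)‖) ∧
    ‖∑' m : ℕ, (α ((2*s+1)*n + 2*m*n)) * (epsCoef s m : ℂ)‖ ≤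
      2 * π * M *
        (∑ k ∈ Finset.range (s + 1),
            (-1:ℝ)^k * (Nat.choose (2*s+1) (s - k) : ℝ) * ρ ^ (2*n*(s - k))) /
          (ρ ^ n * (ρ ^ (2*n) - 1) ^ (2*s)) := by
  set R := ρ ^ (2 * n)
  have hR : 1 < R := one_lt_pow₀ hρ (by omega)
  have hr : |R⁻¹| < 1 := by
    rw [abs_of_pos (by positivity)]
    exact inv_lt_one_of_one_lt₀ hR
  have hsum := hasSum_abs_epsCoef_mul_pow hs hr
  set c := 2 * M * (ρ ^ n)⁻¹ * R⁻¹ ^ s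
  have hbound := norm_mul_epsCoef_le (s := s) (n := n) hα
  have hsummable := (hsum.summable.mul_left c).of_nonneg_of_le (fun _ => norm_nonneg _) hbound
  refine ⟨hsummable, ?_⟩
  calc _ ≤ ∑' m : ℕ, ‖α ((2*s+1)*n + 2*m*n) * (epsCoef s m : ℂ)‖ :=
          norm_tsum_le_tsum_norm hsummable
    _ ≤ ∑' m : ℕ, c * (|epsCoef s m| * R⁻¹ ^ m) :=
          hsummable.tsum_le_tsum hbound (hsum.summable.mul_left c)
    _ = 2 * M * π * (ρ ^ n)⁻¹ * (R⁻¹ ^ s * ((∑ k ∈ range (s + 1),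
          (-1) ^ k * ((2 * s + 1).choose (s - k) : ℝ) * R⁻¹ ^ k) / (1 - R⁻¹) ^ (2 * s))) := by
      rw [tsum_mul_left, hsum.tsum_eq]
      ring
    _ = _ := by
      rw [inv_pow_mul_sum_div_one_sub_inv_pow hR]
      simp only [R, ← pow_mul]
      ring

/-- For `n ≥ 1`, `s ≥ 1`, `ρ > 1`, `M ≥ 0` and complex coefficients `α_k` with
`|α_k| ≤ 2M ρ^(−k)`, the series `Σ_m α_{(2s+1)n+2mn} ε_m` converges absolutely and
`|Σ_m α_{(2s+1)n+2mn} ε_m| ≤ 2πM (Σ_{k=0}^{s} (−1)^k C(2s+1, s−k) ρ^(2n(s−k))) /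
(ρ^n (ρ^(2n) − 1)^(2s))`. -/
theorem stmt10 (n s : ℕ) (hn : 1 ≤ n) (hs : 1 ≤ s) (ρ : ℝ) (hρ : 1 < ρ)
    (M : ℝ) (hM : 0 ≤ M) (α : ℕ → ℂ)
    (hα : ∀ k : ℕ, ‖α k‖ ≤ 2 * M * ρ ^ (-(k:ℤ))) :
    Summable (fun m : ℕ => ‖(α ((2*s+1)*n + 2*m*n)) * (epsCoef s m : ℂ)‖) ∧
    ‖∑' m : ℕ, (α ((2*s+1)*n + 2*m*n)) * (epsCoef s m : ℂ)‖ ≤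
      2 * π * M *
        (∑ k ∈ Finset.range (s + 1),
            (-1:ℝ)^k * (Nat.choose (2*s+1) (s - k) : ℝ) * ρ ^ (2*n*(s - k))) /
          (ρ ^ n * (ρ ^ (2*n) - 1) ^ (2*s)) :=
  stmt10_general n s hn hs ρ hρ M α hα
end

section
/- Let n ≥ 1, s ≥ 1 be integers and ρ > 1, and set a_{2n} = (ρ^{2n} + ρ^{−2n})/2. Then ∫_{0}^{π} dθ / (a_{2n} + cos 2nθ)^{2s} = (2ρ^{2n})^{2s} · π · (Σ_{m=0}^{2s−1} C(2s−1, m) C(4s−m−2, 2s−1) (ρ^{4n} − 1)^m) / (ρ^{4n} − 1)^{4s−1}. -/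
/-!
For `r > 1` and `a = (r + r⁻¹) / 2`, the integrals `I_k = ∫₀^π (a + cos θ)⁻ᵏ dθ` satisfy
`(k + 1)(a² - 1) I_{k+2} = (2k + 1) a I_{k+1} - k I_k`: integrate the derivative of
`sin θ / (a + cos θ)^(k+1)` over `[0, π]`. The candidate
`I_{m+1} = (2r)^(m+1) π S_m(r²) / (r² - 1)^(2m+1)`, with
`S_m(t) = ∑ⱼ C(m, j)² tʲ = (1 - t)^m P_m((1 + t) / (1 - t))`, satisfies the same recurrence
because the Legendre polynomials `P_m` do (Bonnet), and it is right for `I_1` by an explicit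
arctan antiderivative. Periodicity removes the factor `2n` in `cos 2nθ`, and Vandermonde's
identity rewrites `S_m(u + 1)` as `∑ₖ C(m, k) C(2m - k, m) uᵏ`; take `r = ρ^(2n)` and
`u = ρ^(4n) - 1`.
-/

open Real Finset Polynomial

theorem Nat.mul_choose_succ_sq (N j : ℕ) :
    N * N.choose (j + 1) ^ 2 = N.choose j * N.choose (j + 1) + N.choose (j + 1) * N.choose (j + 2)
      + (N + 2) * N.choose j * N.choose (j + 2) := by
  rcases lt_or_ge N (j + 1) with h | h
  · simp [Nat.choose_eq_zero_of_lt h, Nat.choose_eq_zero_of_lt (h.trans j.succ.lt_succ_self)]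
  obtain ⟨d, rfl⟩ := Nat.exists_eq_add_of_le h
  have h1 := Nat.choose_succ_right_eq (j + 1 + d) j
  have h2 := Nat.choose_succ_right_eq (j + 1 + d) (j + 1)
  rw [show j + 1 + d - j = d + 1 by omega] at h1
  rw [show j + 1 + d - (j + 1) = d by omega] at h2
  -- times `(j + 1)(j + 2)`, the identity follows from `C(N, i + 1) (i + 1) = C(N, i) (N - i)`
  refine Nat.eq_of_mul_eq_mul_left (show 0 < (j + 1) * (j + 2) by positivity) ?_
  zify at h1 h2 ⊢
  linear_combination ((j + 1 + d) * (j + 2) - d : ℤ) * ((j + 1 + d).choose (j + 1) : ℤ) * h1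
    - (((j + 1 + d).choose (j + 1) : ℤ) + (j + 1 + d + 2) * ((j + 1 + d).choose j : ℤ))
      * (j + 1) * h2

theorem Nat.sum_range_choose_sq_mul_choose (N m : ℕ) :
    ∑ j ∈ range (N + 1), N.choose j ^ 2 * j.choose m = N.choose m * (2 * N - m).choose N := by
  rcases lt_or_ge N m with h | h
  · rw [Nat.choose_eq_zero_of_lt h, zero_mul]
    exact sum_eq_zero fun j hj => by
      rw [Nat.choose_eq_zero_of_lt ((mem_range.1 hj).trans_le h), mul_zero]
  obtain ⟨d, rfl⟩ := Nat.exists_eq_add_of_le h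
  have vandermonde : (2 * (m + d) - m).choose (m + d) =
      ∑ i ∈ range (d + 1), d.choose i * (m + d).choose (m + i) := by
    rw [show 2 * (m + d) - m = d + (m + d) by omega, ← Nat.choose_symm_add, Nat.add_choose_eq,
      Nat.sum_antidiagonal_eq_sum_range_succ_mk]
    refine sum_congr rfl fun i hi => ?_
    have := mem_range.1 hi
    rw [← Nat.choose_symm (show d - i ≤ m + d by omega), show m + d - (d - i) = m + i by omega]
  rw [vandermonde, mul_sum, show m + d + 1 = m + (d + 1) by omega, sum_range_add,
    sum_eq_zero fun j hj => by rw [Nat.choose_eq_zero_of_lt (mem_range.1 hj), mul_zero], zero_add]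
  refine sum_congr rfl fun i hi => ?_
  rw [sq, mul_assoc, Nat.choose_mul (Nat.le_add_right m i), Nat.add_sub_cancel_left,
    Nat.add_sub_cancel_left]
  ring

noncomputable def chooseSqPoly (R : Type*) [CommRing R] (N : ℕ) : R[X] :=
  ∑ j ∈ range (N + 1), C ((N.choose j : R) ^ 2) * X ^ j

section chooseSqPoly

variable {R : Type*} [CommRing R]

theorem coeff_chooseSqPoly (N j : ℕ) : (chooseSqPoly R N).coeff j = (N.choose j : R) ^ 2 := by
  simp only [chooseSqPoly, finsetSum_coeff, coeff_C_mul_X_pow, sum_ite_eq, mem_range]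
  split_ifs with h
  · rfl
  · simp [Nat.choose_eq_zero_of_lt (not_lt.1 h)]

theorem chooseSqPoly_zero : chooseSqPoly R 0 = 1 := by
  simp [chooseSqPoly]

theorem chooseSqPoly_one : chooseSqPoly R 1 = X + 1 := by
  simp [chooseSqPoly, sum_range_succ, add_comm]

theorem chooseSqPoly_add_two (N : ℕ) :
    C ((N : R) + 2) * chooseSqPoly R (N + 2) =
      C (2 * (N : R) + 3) * (X + 1) * chooseSqPoly R (N + 1)
        - C ((N : R) + 1) * (X - 1) ^ 2 * chooseSqPoly R N := by
  ext (_ | _ | j) <;>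
    simp only [sq, mul_assoc, add_mul, sub_mul, one_mul, coeff_add, coeff_sub, coeff_C_mul,
      coeff_X_mul, coeff_X_mul_zero, coeff_chooseSqPoly, mul_add, mul_sub]
  · push_cast [Nat.choose_zero_right]; ring
  · push_cast [Nat.choose_zero_right, Nat.choose_one_right]; ring
  · have hcore := congrArg (Nat.cast (R := R)) (Nat.mul_choose_succ_sq N j)
    simp only [Nat.choose_succ_succ'] at hcore ⊢
    push_cast at hcore ⊢
    linear_combination (-2 : R) * hcore

theorem chooseSqPoly_comp_X_add_one (N : ℕ) :
    (chooseSqPoly R N).comp (X + 1) =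
      ∑ m ∈ range (N + 1), C ((N.choose m : R) * (2 * N - m).choose N) * X ^ m := by
  ext m
  have key := congrArg (Nat.cast (R := R)) (Nat.sum_range_choose_sq_mul_choose N m)
  push_cast at key
  simp only [chooseSqPoly, Polynomial.sum_comp, C_mul_comp, X_pow_comp, finsetSum_coeff,
    coeff_C_mul, coeff_X_add_one_pow, coeff_X_pow, mul_ite, mul_one, mul_zero, sum_ite_eq,
    mem_range]
  rw [key]
  split_ifs with h
  · rfl
  · simp [Nat.choose_eq_zero_of_lt (not_lt.1 h)]

end chooseSqPoly

noncomputable def addCosIntegral (a : ℝ) (k : ℕ) : ℝ := ∫ θ in 0..π, 1 / (a + cos θ) ^ k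

section addCosIntegral

variable {a : ℝ}

theorem add_cos_pos (ha : 1 < a) (θ : ℝ) : 0 < a + cos θ := by
  linarith [neg_one_le_cos θ]

theorem continuous_one_div_add_cos_pow (ha : 1 < a) (k : ℕ) :
    Continuous fun θ => 1 / (a + cos θ) ^ k :=
  continuous_const.div ((continuous_const.add continuous_cos).pow k)
    fun θ => (pow_pos (add_cos_pos ha θ) k).ne'

theorem hasDerivAt_sin_div_add_cos_pow {θ : ℝ} (hθ : a + cos θ ≠ 0) (k : ℕ) :
    HasDerivAt (fun θ => sin θ / (a + cos θ) ^ (k + 1))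
      ((2 * k + 1) * a * (1 / (a + cos θ) ^ (k + 1)) - k * (1 / (a + cos θ) ^ k)
        - (k + 1) * (a ^ 2 - 1) * (1 / (a + cos θ) ^ (k + 2))) θ := by
  refine ((hasDerivAt_sin θ).div (((hasDerivAt_cos θ).const_add a).pow (k + 1))
    (pow_ne_zero _ hθ)).congr_deriv ?_
  simp only [Pi.pow_apply, Nat.add_sub_cancel]
  field_simp
  rw [sin_sq]
  push_cast
  ring

theorem addCosIntegral_recurrence (ha : 1 < a) (k : ℕ) :
    (k + 1) * (a ^ 2 - 1) * addCosIntegral a (k + 2) =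
      (2 * k + 1) * a * addCosIntegral a (k + 1) - k * addCosIntegral a k := by
  have hint : ∀ j, IntervalIntegrable (fun θ => 1 / (a + cos θ) ^ j) MeasureTheory.volume 0 π :=
    fun j => (continuous_one_div_add_cos_pow ha j).intervalIntegrable 0 π
  have hftc := intervalIntegral.integral_eq_sub_of_hasDerivAt
    (fun θ _ => hasDerivAt_sin_div_add_cos_pow (add_cos_pos ha θ).ne' k)
    ((((hint _).const_mul _).sub ((hint _).const_mul _)).sub ((hint _).const_mul _))
  rw [intervalIntegral.integral_sub (((hint _).const_mul _).sub ((hint _).const_mul _))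
      ((hint _).const_mul _), intervalIntegral.integral_sub ((hint _).const_mul _)
      ((hint _).const_mul _)] at hftc
  simp only [intervalIntegral.integral_const_mul, sin_pi, sin_zero, zero_div, sub_zero] at hftc
  unfold addCosIntegral
  linear_combination -hftc

end addCosIntegral

-- Unlike the half-angle substitution, this antiderivative is smooth on all of `ℝ` when `r > 1`.
theorem hasDerivAt_sub_two_mul_arctan_sin_div {r θ : ℝ} (hθ : r + cos θ ≠ 0) :
    HasDerivAt (fun θ => θ - 2 * arctan (sin θ / (r + cos θ)))
      ((r ^ 2 - 1) / (r ^ 2 + 2 * r * cos θ + 1)) θ := by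
  have hD : r * (r + 2 * cos θ) + 1 ≠ 0 := by
    nlinarith [sin_sq_add_cos_sq θ, sq_pos_of_ne_zero hθ, sq_nonneg (sin θ)]
  refine ((hasDerivAt_id θ).sub (((hasDerivAt_sin θ).div ((hasDerivAt_cos θ).const_add r)
    hθ).arctan.const_mul 2)).congr_deriv ?_
  simp only [Pi.div_apply]
  field_simp
  linear_combination (-2 * r * (r + cos θ)) * sin_sq_add_cos_sq θ

theorem one_lt_add_inv_div_two {r : ℝ} (hr : 1 < r) : 1 < (r + r⁻¹) / 2 := by
  have : 0 < r := by linarith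
  rw [lt_div_iff₀ two_pos, ← sub_pos]
  field_simp
  nlinarith

theorem addCosIntegral_one {r : ℝ} (hr : 1 < r) :
    addCosIntegral ((r + r⁻¹) / 2) 1 = 2 * r * π / (r ^ 2 - 1) := by
  have hr2 : r ^ 2 - 1 ≠ 0 := by nlinarith
  have hrc : ∀ θ, r + cos θ ≠ 0 := fun θ => by linarith [neg_one_le_cos θ]
  have hderiv : ∀ θ, HasDerivAt
      (fun θ => 2 * r / (r ^ 2 - 1) * (θ - 2 * arctan (sin θ / (r + cos θ))))
      (1 / ((r + r⁻¹) / 2 + cos θ) ^ 1) θ := fun θ =>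
    ((hasDerivAt_sub_two_mul_arctan_sin_div (hrc θ)).const_mul _).congr_deriv (by
      have : r ≠ 0 := by linarith
      have := add_cos_pos (one_lt_add_inv_div_two hr) θ
      field_simp
      ring)
  rw [addCosIntegral, intervalIntegral.integral_eq_sub_of_hasDerivAt (fun θ _ => hderiv θ)
    ((continuous_one_div_add_cos_pow (one_lt_add_inv_div_two hr) 1).intervalIntegrable 0 π)]
  simp only [sin_pi, cos_pi, sin_zero, cos_zero, zero_div, arctan_zero, mul_zero, sub_zero]
  ring

noncomputable def addCosIntegralFormula (r : ℝ) (m : ℕ) : ℝ :=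
  (2 * r) ^ (m + 1) * π * (chooseSqPoly ℝ m).eval (r ^ 2) / (r ^ 2 - 1) ^ (2 * m + 1)

-- At `m = 0` the truncated index `m - 1` is harmless: its term carries the factor `m`.
theorem addCosIntegralFormula_recurrence {r : ℝ} (hr : 1 < r) (m : ℕ) :
    (m + 1) * (((r + r⁻¹) / 2) ^ 2 - 1) * addCosIntegralFormula r (m + 1) =
      (2 * m + 1) * ((r + r⁻¹) / 2) * addCosIntegralFormula r m
        - m * addCosIntegralFormula r (m - 1) := by
  have hr0 : r ≠ 0 := by positivity
  have hr2 : r ^ 2 - 1 ≠ 0 := by nlinarith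
  rcases m with _ | m
  · simp only [addCosIntegralFormula, zero_add, chooseSqPoly_zero, chooseSqPoly_one, eval_add,
      eval_X, eval_one, CharP.cast_eq_zero, zero_mul, sub_zero]
    field_simp
    ring
  · have h := congrArg (eval (r ^ 2)) (chooseSqPoly_add_two (R := ℝ) m)
    simp only [eval_mul, eval_sub, eval_C, eval_add, eval_X, eval_one, eval_pow] at h
    simp only [addCosIntegralFormula, Nat.add_sub_cancel]
    push_cast
    linear_combination (norm := skip) (2 * r) ^ (m + 1) * π / (r ^ 2 - 1) ^ (2 * m + 3) * h
    field_simp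
    ring

theorem addCosIntegral_succ_eq_formula {r : ℝ} (hr : 1 < r) (m : ℕ) :
    addCosIntegral ((r + r⁻¹) / 2) (m + 1) = addCosIntegralFormula r m := by
  have ha := one_lt_add_inv_div_two hr
  have ha2 : ((r + r⁻¹) / 2) ^ 2 - 1 ≠ 0 := by nlinarith
  -- the second conjunct supplies the `k * I_k` term of the recurrence, vacuous at `k = 0`
  suffices ∀ k : ℕ, addCosIntegral ((r + r⁻¹) / 2) (k + 1) = addCosIntegralFormula r k ∧
      (k : ℝ) * addCosIntegral ((r + r⁻¹) / 2) k = k * addCosIntegralFormula r (k - 1) from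
    (this m).1
  intro k
  induction k with
  | zero =>
    exact ⟨by simp [addCosIntegral_one hr, addCosIntegralFormula, chooseSqPoly_zero], by simp⟩
  | succ k ih =>
    have hc : ((k : ℝ) + 1) * (((r + r⁻¹) / 2) ^ 2 - 1) ≠ 0 := mul_ne_zero (by positivity) ha2
    refine ⟨mul_left_cancel₀ hc ?_, by push_cast; rw [ih.1]⟩
    rw [addCosIntegral_recurrence ha, addCosIntegralFormula_recurrence hr, ih.1, ih.2]

theorem integral_comp_cos_zero_two_pi {f : ℝ → ℝ} (hf : Continuous fun θ => f (cos θ)) :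
    ∫ θ in 0..(2 * π), f (cos θ) = 2 * ∫ θ in 0..π, f (cos θ) := by
  have hreflect : ∫ θ in π..(2 * π), f (cos θ) = ∫ θ in 0..π, f (cos θ) := by
    have h := intervalIntegral.integral_comp_sub_left (a := 0) (b := π) (fun θ => f (cos θ)) (2 * π)
    simp only [cos_two_pi_sub, sub_zero, show 2 * π - π = π by ring] at h
    exact h.symm
  rw [← intervalIntegral.integral_add_adjacent_intervals (hf.intervalIntegrable 0 π)
    (hf.intervalIntegrable π (2 * π)), hreflect, two_mul]

theorem integral_comp_cos_two_mul_nat_mul {f : ℝ → ℝ} (hf : Continuous fun θ => f (cos θ))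
    {n : ℕ} (hn : n ≠ 0) :
    ∫ θ in 0..π, f (cos (2 * n * θ)) = ∫ θ in 0..π, f (cos θ) := by
  have hper : Function.Periodic (fun θ => f (cos θ)) (2 * π) := fun θ => by simp [cos_add_two_pi]
  have h := hper.intervalIntegral_add_zsmul_eq n 0 fun _ _ => hf.intervalIntegrable _ _
  simp only [zero_add, zsmul_eq_mul, Int.cast_natCast] at h
  rw [intervalIntegral.integral_comp_mul_left (fun θ => f (cos θ)) (by positivity),
    mul_zero, show 2 * (n : ℝ) * π = n * (2 * π) by ring, h, integral_comp_cos_zero_two_pi hf,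
    smul_eq_mul]
  field_simp

/-- For `n ≥ 1`, `s ≥ 1`, `ρ > 1` and `a_{2n} = (ρ^(2n) + ρ^(−2n))/2`:
`∫_{0}^{π} dθ/(a_{2n} + cos 2nθ)^(2s) = (2ρ^(2n))^(2s) π
(Σ_{m=0}^{2s−1} C(2s−1,m) C(4s−m−2,2s−1) (ρ^(4n)−1)^m) / (ρ^(4n)−1)^(4s−1)`. -/
theorem stmt13 (n s : ℕ) (hn : 1 ≤ n) (hs : 1 ≤ s) (ρ : ℝ) (hρ : 1 < ρ)
    (a : ℝ) (ha : a = (ρ ^ (2*n) + ρ ^ (-(2*(n:ℤ)))) / 2) :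
    ∫ θ in (0:ℝ)..π, 1 / (a + Real.cos (2*n*θ)) ^ (2*s) =
      (2 * ρ ^ (2*n)) ^ (2*s) * π *
        (∑ m ∈ Finset.range (2*s),
            (Nat.choose (2*s - 1) m : ℝ) * (Nat.choose (4*s - m - 2) (2*s - 1) : ℝ) *
              (ρ ^ (4*n) - 1) ^ m) /
        (ρ ^ (4*n) - 1) ^ (4*s - 1) := by
  set r := ρ ^ (2 * n)
  have hr : 1 < r := one_lt_pow₀ hρ (by omega)
  have ha' : a = (r + r⁻¹) / 2 := by
    rw [ha, show -(2 * (n : ℤ)) = -((2 * n : ℕ) : ℤ) by push_cast; ring, zpow_neg, zpow_natCast]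
  have hρ4 : ρ ^ (4 * n) = r ^ 2 := by rw [← pow_mul]; ring_nf
  obtain ⟨N, hN⟩ : ∃ N, 2 * s = N + 1 := ⟨2 * s - 1, by omega⟩
  have hsum := congrArg (eval (r ^ 2 - 1)) (chooseSqPoly_comp_X_add_one (R := ℝ) N)
  simp only [eval_comp, eval_add, eval_X, eval_one, sub_add_cancel, eval_finsetSum, eval_mul,
    eval_C, eval_pow] at hsum
  rw [integral_comp_cos_two_mul_nat_mul (f := fun x => 1 / (a + x) ^ (2 * s))
      (by subst ha'; exact continuous_one_div_add_cos_pow (one_lt_add_inv_div_two hr) _) (by omega)]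
  change addCosIntegral a (2 * s) = _
  rw [ha', hN, addCosIntegral_succ_eq_formula hr, addCosIntegralFormula, hρ4,
    show 4 * s - 1 = 2 * N + 1 by omega, Nat.add_sub_cancel, hsum]
  congr 3 with m
  rw [show 4 * s - m - 2 = 2 * N - m by omega]
end
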